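/- Among all nonnegative integrable functions K on ℝ satisfying ∫K = 1, ∫ t K(t) dt = 0, and ∫ t² K(t) dt = 1/5, the functional I(K) = ∫ K(t)² dt is minimized by the standard Epanechnikov kernel K*(t) = (3/4)(1 − t²)·1_{[−1,1]}(t), and the minimal value is 3/5. -/
import Mathlib


open MeasureTheory

/-- The standard Epanechnikov kernel on ℝ. -/
noncomputable def epan (t : ℝ) : ℝ := if |t| ≤ 1 then (3 / 4) * (1 - t ^ 2) else 0

lemma epan_eq : epan = (Set.Icc (-1:ℝ) 1).indicator (fun t => 3/4*(1-t^2)) := by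
  funext t
  simp [epan, Set.indicator, Set.mem_Icc, abs_le]

lemma epan_nonneg (t : ℝ) : 0 ≤ epan t := by
  rw [epan_eq]
  by_cases h : t ∈ Set.Icc (-1:ℝ) 1
  · rw [Set.indicator_of_mem h]
    have h1 : |t| ≤ 1 := abs_le.2 ⟨h.1, h.2⟩
    have : t^2 ≤ 1 := by
      have := sq_abs t ▸ pow_le_pow_left₀ (abs_nonneg t) h1 2
      simpa [sq_abs] using this
    nlinarith
  · rw [Set.indicator_of_notMem h]

lemma epan_le (t : ℝ) : epan t ≤ 3/4 := by
  rw [epan_eq]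
  by_cases h : t ∈ Set.Icc (-1:ℝ) 1
  · rw [Set.indicator_of_mem h]; nlinarith [sq_nonneg t]
  · rw [Set.indicator_of_notMem h]; norm_num

lemma ge_quad (t : ℝ) : 3/4*(1-t^2) ≤ epan t := by
  rw [epan_eq]
  by_cases h : t ∈ Set.Icc (-1:ℝ) 1
  · rw [Set.indicator_of_mem h]
  · rw [Set.indicator_of_notMem h]
    rw [Set.mem_Icc, not_and_or] at h
    have : 1 ≤ t^2 := by
      rcases h with h | h
      · push_neg at h; nlinarith
      · push_neg at h; nlinarith
    nlinarith

lemma epan_sq_integrable : Integrable (fun t => (epan t)^2) := by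
  have : (fun t => (epan t)^2) =
      (Set.Icc (-1:ℝ) 1).indicator (fun t => (3/4*(1-t^2))^2) := by
    funext t
    rw [epan_eq]
    by_cases h : t ∈ Set.Icc (-1:ℝ) 1
    · simp [Set.indicator_of_mem h]
    · simp [Set.indicator_of_notMem h]
  rw [this]
  rw [integrable_indicator_iff measurableSet_Icc]
  exact (Continuous.integrableOn_Icc (by continuity))

lemma epan_integrable : Integrable epan := by
  rw [epan_eq, integrable_indicator_iff measurableSet_Icc]
  exact (Continuous.integrableOn_Icc (by continuity))

lemma epan_sq_integral : ∫ t, (epan t) ^ 2 = 3 / 5 := by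
  have heq : (fun t => (epan t)^2) =
      (Set.Icc (-1:ℝ) 1).indicator (fun t => (3/4*(1-t^2))^2) := by
    funext t
    rw [epan_eq]
    by_cases h : t ∈ Set.Icc (-1:ℝ) 1
    · simp [Set.indicator_of_mem h]
    · simp [Set.indicator_of_notMem h]
  rw [heq, integral_indicator measurableSet_Icc,
      MeasureTheory.integral_Icc_eq_integral_Ioc,
      ← intervalIntegral.integral_of_le (by norm_num : (-1:ℝ) ≤ 1)]
  have hderiv : ∀ x ∈ Set.uIcc (-1:ℝ) 1,
      HasDerivAt (fun t : ℝ => 9/16*(t - 2*t^3/3 + t^5/5)) ((3/4*(1-x^2))^2) x := by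
    intro x _
    have h : HasDerivAt (fun t : ℝ => 9/16*(t - 2*t^3/3 + t^5/5))
        (9/16*(1 - 2*(3*x^2)/3 + (5*x^4)/5)) x := by
      apply HasDerivAt.const_mul
      exact (((hasDerivAt_id x).sub (((hasDerivAt_pow 3 x).const_mul 2).div_const 3)).add
        ((hasDerivAt_pow 5 x).div_const 5))
    convert h using 1
    ring
  rw [intervalIntegral.integral_eq_sub_of_hasDerivAt hderiv]
  · norm_num
  · apply Continuous.intervalIntegrable
    continuity

theorem epan_minimizes_I :
    (∀ K : ℝ → ℝ, (∀ t, 0 ≤ K t) →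
      Integrable K → Integrable (fun t => (K t) ^ 2) →
      Integrable (fun t => t * K t) → Integrable (fun t => t ^ 2 * K t) →
      (∫ t, K t) = 1 → (∫ t, t * K t) = 0 → (∫ t, t ^ 2 * K t) = 1 / 5 →
      3 / 5 ≤ ∫ t, (K t) ^ 2) ∧
    ∫ t, (epan t) ^ 2 = 3 / 5 := by
  constructor
  · intro K hK0 hKi hK2i _ hKt2i hK1 _ hKm2
    -- cross term integrable
    have hmeas : AEStronglyMeasurable (fun t => K t * epan t) volume := by
      exact hKi.aestronglyMeasurable.mul epan_integrable.aestronglyMeasurable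
    have hcross : Integrable (fun t => K t * epan t) := by
      refine Integrable.mono (hKi.const_mul (3/4)) hmeas ?_
      filter_upwards with t
      rw [Real.norm_eq_abs, Real.norm_eq_abs, abs_of_nonneg (mul_nonneg (hK0 t) (epan_nonneg t)),
        abs_of_nonneg (mul_nonneg (by norm_num) (hK0 t))]
      calc K t * epan t ≤ K t * (3/4) := mul_le_mul_of_nonneg_left (epan_le t) (hK0 t)
        _ = 3/4 * K t := by ring
    -- lower bound on cross term
    have hquadi : Integrable (fun t => 3/4*(1-t^2) * K t) := by
      have : (fun t => 3/4*(1-t^2) * K t) =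
          (fun t => 3/4 * K t - 3/4 * (t^2 * K t)) := by funext t; ring
      rw [this]
      exact (hKi.const_mul _).sub (hKt2i.const_mul _)
    have hquadint : ∫ t, 3/4*(1-t^2) * K t = 3/5 := by
      have : (fun t => 3/4*(1-t^2) * K t) =
          (fun t => 3/4 * K t - 3/4 * (t^2 * K t)) := by funext t; ring
      rw [this, integral_sub (hKi.const_mul _) (hKt2i.const_mul _),
        MeasureTheory.integral_const_mul, MeasureTheory.integral_const_mul, hK1, hKm2]
      norm_num
    have hcross_lb : 3/5 ≤ ∫ t, K t * epan t := by
      rw [← hquadint]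
      apply integral_mono hquadi hcross
      intro t
      have := mul_le_mul_of_nonneg_left (ge_quad t) (hK0 t)
      simp only []
      nlinarith [this]
    -- nonnegativity of the square integral
    have hsqi : Integrable (fun t => (K t - epan t)^2) := by
      have : (fun t => (K t - epan t)^2) =
          (fun t => (K t)^2 - 2 * (K t * epan t) + (epan t)^2) := by funext t; ring
      rw [this]
      exact (hK2i.sub (hcross.const_mul 2)).add epan_sq_integrable
    have hnn : 0 ≤ ∫ t, (K t - epan t)^2 :=
      integral_nonneg fun t => sq_nonneg _
    have hexp : ∫ t, (K t - epan t)^2 =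
        (∫ t, (K t)^2) - 2 * (∫ t, K t * epan t) + (∫ t, (epan t)^2) := by
      have : (fun t => (K t - epan t)^2) =
          (fun t => (K t)^2 - 2 * (K t * epan t) + (epan t)^2) := by funext t; ring
      have hsub : Integrable (fun t => (K t)^2 - 2 * (K t * epan t)) :=
        hK2i.sub (hcross.const_mul 2)
      rw [this, integral_add hsub epan_sq_integrable,
        integral_sub hK2i (hcross.const_mul 2), MeasureTheory.integral_const_mul]
    rw [hexp, epan_sq_integral] at hnn
    linarith
  · exact epan_sq_integral
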